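/- arXiv:1409.0494 — 4 statements merged into one kernel-verified Lean document; each statement's English description precedes it below -/
import Mathlib

section
/- For all t > 0, the exponential integral satisfies (1/2)·ln(1 + 2/t) < e^t·E₁(t) < ln(1 + 1/t), where E₁(t) = ∫_t^∞ e^{-u}/u du. -/
open MeasureTheory Real

/-- The exponential integral `E₁ t = ∫_t^∞ e^{-u}/u du`. -/
noncomputable def expIntegralE1 (t : ℝ) : ℝ := ∫ u in Set.Ioi t, Real.exp (-u) / u

/-! With `F t = eᵗ E₁(t)` one has `F' = F - 1/t` and `F → 0` at infinity. Two functions with the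
same limit at infinity are ordered on `(0, ∞)` opposite to their derivatives. Comparing `E₁` with
`e^{-t}/(t+1)` and `e^{-t}(1/t + 1/(t+2))/2`, whose derivatives are explicit, gives
`1/(t+1) < F t < (1/t + 1/(t+2))/2`; these are exactly the bounds that make
`F - ½ log(1 + 2/t)` and `log(1 + 1/t) - F` decreasing, and both tend to `0`. -/

open Set Filter Topology

lemma hasDerivAt_integral_Ioi {f : ℝ → ℝ} {a t : ℝ} (hf : IntegrableOn f (Ioi a))
    (hcont : ContinuousOn f (Ioi a)) (ht : a < t) :
    HasDerivAt (fun x => ∫ u in Ioi x, f u) (-f t) t := by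
  have hFTC : HasDerivAt (fun x => ∫ u in a..x, f u) (f t) t :=
    intervalIntegral.integral_hasDerivAt_right
      ((intervalIntegrable_iff_integrableOn_Ioc_of_le ht.le).2 (hf.mono_set Ioc_subset_Ioi_self))
      (hcont.stronglyMeasurableAtFilter isOpen_Ioi t ht)
      (hcont.continuousAt (Ioi_mem_nhds ht))
  refine (hFTC.const_sub (∫ u in Ioi a, f u)).congr_of_eventuallyEq ?_
  filter_upwards [Ioi_mem_nhds ht] with x hx
  rw [← intervalIntegral.integral_Ioi_sub_Ioi hf (le_of_lt hx), sub_sub_cancel]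

lemma lt_of_hasDerivAt_lt_of_tendsto {f g f' g' : ℝ → ℝ} {a l x : ℝ}
    (hf : ∀ y ∈ Ioi a, HasDerivAt f (f' y) y) (hg : ∀ y ∈ Ioi a, HasDerivAt g (g' y) y)
    (hlt : ∀ y ∈ Ioi a, f' y < g' y) (hfl : Tendsto f atTop (𝓝 l))
    (hgl : Tendsto g atTop (𝓝 l)) (hx : a < x) : g x < f x := by
  have hanti : StrictAntiOn (f - g) (Ioi a) := by
    refine strictAntiOn_of_hasDerivWithinAt_neg (f' := fun y => f' y - g' y) (convex_Ioi a)
      (fun y hy => ((hf y hy).sub (hg y hy)).continuousAt.continuousWithinAt)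
      (fun y hy => ?_) (fun y hy => ?_) <;> rw [interior_Ioi] at hy
    · exact ((hf y hy).sub (hg y hy)).hasDerivWithinAt
    · exact sub_neg.2 (hlt y hy)
  have hx1 : a < x + 1 := by linarith
  have hlim : 0 ≤ (f - g) (x + 1) := by
    refine le_of_tendsto (sub_self l ▸ hfl.sub hgl : Tendsto (f - g) atTop (𝓝 0)) ?_
    filter_upwards [eventually_ge_atTop (x + 1)] with y hy
    exact hanti.antitoneOn hx1 (hx1.trans_le hy) hy
  have := hanti hx hx1 (lt_add_one x)
  simp only [Pi.sub_apply] at this hlim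
  linarith

lemma continuousOn_exp_neg_div_self : ContinuousOn (fun u : ℝ => exp (-u) / u) (Ioi 0) :=
  (continuous_exp.comp continuous_neg).continuousOn.div continuousOn_id fun _ hu => ne_of_gt hu

lemma integrableOn_exp_neg_div_self {a : ℝ} (ha : 0 < a) :
    IntegrableOn (fun u : ℝ => exp (-u) / u) (Ioi a) := by
  refine ((integrableOn_exp_neg_Ioi a).div_const a).mono'
    ((continuousOn_exp_neg_div_self.mono (Ioi_subset_Ioi ha.le)).aestronglyMeasurable
      measurableSet_Ioi) ?_
  filter_upwards [ae_restrict_mem measurableSet_Ioi] with u (hu : a < u)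
  rw [norm_of_nonneg (div_nonneg (exp_pos _).le (ha.trans hu).le)]
  gcongr

lemma hasDerivAt_expIntegralE1 {t : ℝ} (ht : 0 < t) :
    HasDerivAt expIntegralE1 (-(exp (-t) / t)) t :=
  hasDerivAt_integral_Ioi (integrableOn_exp_neg_div_self (half_pos ht))
    (continuousOn_exp_neg_div_self.mono (Ioi_subset_Ioi (half_pos ht).le)) (half_lt_self ht)

lemma expIntegralE1_nonneg {t : ℝ} (ht : 0 ≤ t) : 0 ≤ expIntegralE1 t :=
  setIntegral_nonneg measurableSet_Ioi fun u (hu : t < u) =>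
    div_nonneg (exp_pos _).le (ht.trans hu.le)

lemma expIntegralE1_le {t : ℝ} (ht : 0 < t) : expIntegralE1 t ≤ exp (-t) / t :=
  calc expIntegralE1 t ≤ ∫ u in Ioi t, exp (-u) / t :=
        setIntegral_mono_on (integrableOn_exp_neg_div_self ht)
          ((integrableOn_exp_neg_Ioi t).div_const t) measurableSet_Ioi
          fun u (hu : t < u) => by gcongr
    _ = exp (-t) / t := by rw [integral_div, integral_exp_neg_Ioi]

lemma tendsto_exp_mul_expIntegralE1_atTop :
    Tendsto (fun t => exp t * expIntegralE1 t) atTop (𝓝 0) := by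
  refine tendsto_of_tendsto_of_tendsto_of_le_of_le' tendsto_const_nhds tendsto_inv_atTop_zero ?_ ?_
  · filter_upwards [eventually_ge_atTop 0] with t ht
    exact mul_nonneg (exp_pos t).le (expIntegralE1_nonneg ht)
  · filter_upwards [eventually_gt_atTop 0] with t ht
    calc exp t * expIntegralE1 t ≤ exp t * (exp (-t) / t) := by
          gcongr; exact expIntegralE1_le ht
      _ = t⁻¹ := by rw [exp_neg]; field_simp

lemma tendsto_expIntegralE1_atTop : Tendsto expIntegralE1 atTop (𝓝 0) := by
  have := tendsto_exp_neg_atTop_nhds_zero.mul tendsto_exp_mul_expIntegralE1_atTop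
  rw [zero_mul] at this
  refine this.congr fun t => ?_
  rw [← mul_assoc, ← exp_add, neg_add_cancel, exp_zero, one_mul]

lemma hasDerivAt_exp_mul_expIntegralE1 {t : ℝ} (ht : 0 < t) :
    HasDerivAt (fun x => exp x * expIntegralE1 x) (exp t * expIntegralE1 t - t⁻¹) t :=
  ((hasDerivAt_exp t).mul (hasDerivAt_expIntegralE1 ht)).congr_deriv <| by
    rw [exp_neg]
    field_simp
    ring

lemma hasDerivAt_log_one_add_div {c x : ℝ} (hc : 0 ≤ c) (hx : 0 < x) :
    HasDerivAt (fun y => log (1 + c / y)) (-(c / (x * (x + c)))) x := by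
  have hinner : HasDerivAt (fun y => 1 + c / y) (-(c / x ^ 2)) x := by
    simpa [div_eq_mul_inv] using ((hasDerivAt_inv hx.ne').const_mul c).const_add 1
  convert hinner.log (by positivity) using 1
  field_simp

lemma tendsto_log_one_add_div_atTop (c : ℝ) :
    Tendsto (fun x => log (1 + c / x)) atTop (𝓝 0) := by
  have h : Tendsto (fun x : ℝ => 1 + c / x) atTop (𝓝 1) := by
    simpa using tendsto_const_nhds.add (tendsto_const_nhds.div_atTop (tendsto_id (α := ℝ)))
  simpa [Function.comp_def] using (continuousAt_log one_ne_zero).tendsto.comp h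

lemma inv_add_one_lt_exp_mul_expIntegralE1 {t : ℝ} (ht : 0 < t) :
    (t + 1)⁻¹ < exp t * expIntegralE1 t := by
  have hderiv : ∀ x ∈ Ioi (0 : ℝ), HasDerivAt (fun y => exp (-y) / (y + 1))
      (-(exp (-x) * ((x + 2) / (x + 1) ^ 2))) x := fun x (hx : 0 < x) =>
    ((hasDerivAt_neg x).exp.div ((hasDerivAt_id' x).add_const 1) (by positivity)).congr_deriv
      (by field_simp; ring)
  have hderiv_lt : ∀ x ∈ Ioi (0 : ℝ), -(exp (-x) / x) < -(exp (-x) * ((x + 2) / (x + 1) ^ 2)) :=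
    fun x (hx : 0 < x) => by
      have key : (x + 2) / (x + 1) ^ 2 < x⁻¹ := by
        rw [div_lt_iff₀ (by positivity), inv_mul_eq_div, lt_div_iff₀ hx]
        nlinarith
      have := mul_lt_mul_of_pos_left key (exp_pos (-x))
      rw [← div_eq_mul_inv] at this
      linarith
  have hlim : Tendsto (fun y => exp (-y) / (y + 1)) atTop (𝓝 0) :=
    tendsto_exp_neg_atTop_nhds_zero.div_atTop (tendsto_atTop_add_const_right _ 1 tendsto_id)
  calc (t + 1)⁻¹ = exp t * (exp (-t) / (t + 1)) := by rw [exp_neg]; field_simp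
    _ < exp t * expIntegralE1 t := by
      gcongr
      exact lt_of_hasDerivAt_lt_of_tendsto (fun x hx => hasDerivAt_expIntegralE1 hx) hderiv
        hderiv_lt tendsto_expIntegralE1_atTop hlim ht

lemma exp_mul_expIntegralE1_lt {t : ℝ} (ht : 0 < t) :
    exp t * expIntegralE1 t < (t⁻¹ + (t + 2)⁻¹) / 2 := by
  have hderiv : ∀ x ∈ Ioi (0 : ℝ), HasDerivAt (fun y => exp (-y) * ((y⁻¹ + (y + 2)⁻¹) / 2))
      (-(exp (-x) * ((x⁻¹ + (x + 2)⁻¹ + (x ^ 2)⁻¹ + ((x + 2) ^ 2)⁻¹) / 2))) x :=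
    fun x (hx : 0 < x) =>
      ((hasDerivAt_neg x).exp.mul (((hasDerivAt_inv hx.ne').add
        (((hasDerivAt_id' x).add_const 2).inv (by positivity))).div_const 2)).congr_deriv
        (by simp only [Pi.add_apply, Pi.inv_apply]; field_simp; ring)
  have hderiv_lt : ∀ x ∈ Ioi (0 : ℝ),
      -(exp (-x) * ((x⁻¹ + (x + 2)⁻¹ + (x ^ 2)⁻¹ + ((x + 2) ^ 2)⁻¹) / 2)) < -(exp (-x) / x) :=
    fun x (hx : 0 < x) => by
      have hsq : (x⁻¹ + (x + 2)⁻¹ + (x ^ 2)⁻¹ + ((x + 2) ^ 2)⁻¹) / 2 - x⁻¹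
          = (x⁻¹ - (x + 2)⁻¹) ^ 2 / 2 := by field_simp; ring
      have hne : x⁻¹ - (x + 2)⁻¹ ≠ 0 := sub_ne_zero.2 (inv_strictAnti₀ hx (by linarith)).ne'
      have key : x⁻¹ < (x⁻¹ + (x + 2)⁻¹ + (x ^ 2)⁻¹ + ((x + 2) ^ 2)⁻¹) / 2 := by
        linarith [div_pos (sq_pos_of_ne_zero hne) two_pos]
      have := mul_lt_mul_of_pos_left key (exp_pos (-x))
      rw [← div_eq_mul_inv] at this
      linarith
  have hlim : Tendsto (fun y => exp (-y) * ((y⁻¹ + (y + 2)⁻¹) / 2)) atTop (𝓝 0) := by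
    have hinv : Tendsto (fun y : ℝ => (y⁻¹ + (y + 2)⁻¹) / 2) atTop (𝓝 0) := by
      simpa using (tendsto_inv_atTop_zero.add (tendsto_inv_atTop_zero.comp
        (tendsto_atTop_add_const_right _ 2 (tendsto_id (α := ℝ))))).div_const 2
    simpa using tendsto_exp_neg_atTop_nhds_zero.mul hinv
  calc exp t * expIntegralE1 t < exp t * (exp (-t) * ((t⁻¹ + (t + 2)⁻¹) / 2)) := by
        gcongr
        exact lt_of_hasDerivAt_lt_of_tendsto hderiv (fun x hx => hasDerivAt_expIntegralE1 hx)
          hderiv_lt hlim tendsto_expIntegralE1_atTop ht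
    _ = (t⁻¹ + (t + 2)⁻¹) / 2 := by rw [← mul_assoc, ← exp_add, add_neg_cancel, exp_zero, one_mul]

lemma half_log_one_add_two_div_lt_exp_mul_expIntegralE1 {t : ℝ} (ht : 0 < t) :
    1 / 2 * log (1 + 2 / t) < exp t * expIntegralE1 t := by
  refine lt_of_hasDerivAt_lt_of_tendsto (fun x hx => hasDerivAt_exp_mul_expIntegralE1 hx)
    (fun x (hx : 0 < x) => (hasDerivAt_log_one_add_div zero_le_two hx).const_mul (1 / 2))
    (fun x (hx : 0 < x) => ?_) tendsto_exp_mul_expIntegralE1_atTop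
    (mul_zero (1 / 2 : ℝ) ▸ (tendsto_log_one_add_div_atTop 2).const_mul (1 / 2)) ht
  have hdiff : (x⁻¹ + (x + 2)⁻¹) / 2 - x⁻¹ = 1 / 2 * -(2 / (x * (x + 2))) := by
    field_simp
    ring
  linarith [exp_mul_expIntegralE1_lt hx]

lemma exp_mul_expIntegralE1_lt_log_one_add_inv {t : ℝ} (ht : 0 < t) :
    exp t * expIntegralE1 t < log (1 + 1 / t) := by
  refine lt_of_hasDerivAt_lt_of_tendsto
    (fun x (hx : 0 < x) => hasDerivAt_log_one_add_div zero_le_one hx)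
    (fun x hx => hasDerivAt_exp_mul_expIntegralE1 hx) (fun x (hx : 0 < x) => ?_)
    (tendsto_log_one_add_div_atTop 1) tendsto_exp_mul_expIntegralE1_atTop ht
  have hdiff : x⁻¹ - 1 / (x * (x + 1)) = (x + 1)⁻¹ := by
    field_simp
    ring
  linarith [inv_add_one_lt_exp_mul_expIntegralE1 hx]

/-- For all `t > 0`, `(1/2)·ln(1 + 2/t) < eᵗ·E₁(t) < ln(1 + 1/t)`. -/
theorem e1_bounds (t : ℝ) (ht : 0 < t) :
    (1 / 2) * Real.log (1 + 2 / t) < Real.exp t * expIntegralE1 t ∧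
      Real.exp t * expIntegralE1 t < Real.log (1 + 1 / t) :=
  ⟨half_log_one_add_two_div_lt_exp_mul_expIntegralE1 ht,
    exp_mul_expIntegralE1_lt_log_one_add_inv ht⟩
end

section
/- Let M* ≥ M_* ≥ 1 be integers, ν ≥ 0 and b > 0 with ν/b ≤ M_*. Consider the minimization of Σ_{i=1}^{M_*} (2i−1+M*−M_*)·α_i over vectors α with 1 ≥ α_1 ≥ α_2 ≥ … ≥ α_{M_*} ≥ 0 subject to Σ_{i=1}^{M_*}(1−α_i) ≤ ν/b. If k ≤ ν/b ≤ k+1 for some integer 0 ≤ k ≤ M_*−1, then the infimum equals Φ_k − Υ_k(ν/b − k), where Φ_k = (M*−k)(M_*−k) and Υ_k = M*+M_*−2k−1, and it is attained at α_i = 1 for i ≤ M_*−k−1, α_{M_*−k} = k+1−ν/b, and α_i = 0 for i > M_*−k. -/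
/-! Writing `β i = 1 - α i` and `w i = 2 i + 1 + M* - M_*`, the objective is `Σ w - Σ w β`, so the
problem is a fractional knapsack: maximise `Σ w β` over `0 ≤ β ≤ 1`, `Σ β ≤ ν/b`, with increasing
weights. The price `c = w (M_* - k - 1) = Υ_k` of the pivot item is a dual certificate: pointwise
`w β ≤ c β + (w - c)⁺`, hence `Σ w β ≤ c ν/b + Σ (w - c)⁺ = c ν/b + k (k + 1)`, and the greedy point
(the `k` heaviest items in full, the pivot item to the extent `ν/b - k`) attains this bound. -/

open Finset

/-- Objective `Σ_{i=1}^{M_*} (2i−1+M*−M_*) α_i` (0-based indexing). -/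
noncomputable def dmtObj (Ms Mm : ℕ) (α : Fin Mm → ℝ) : ℝ :=
  ∑ i : Fin Mm, (2 * ((i : ℕ) : ℝ) + 1 + (Ms : ℝ) - (Mm : ℝ)) * α i

/-- Feasibility: `1 ≥ α_1 ≥ … ≥ α_{M_*} ≥ 0` and `Σ(1−α_i) ≤ ν/b`. -/
def dmtFeasible (Mm : ℕ) (ν b : ℝ) (α : Fin Mm → ℝ) : Prop :=
  Antitone α ∧ (∀ i, 0 ≤ α i) ∧ (∀ i, α i ≤ 1) ∧
    (∑ i : Fin Mm, (1 - α i)) ≤ ν / b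

/-- The optimal point: `α_i = 1` for `i ≤ M_*−k−1`, `α_{M_*−k} = k+1−ν/b`,
    `α_i = 0` otherwise (0-based). -/
noncomputable def dmtOptPoint (Mm k : ℕ) (ν b : ℝ) : Fin Mm → ℝ := fun i =>
  if (i : ℕ) < Mm - k - 1 then 1
  else if (i : ℕ) = Mm - k - 1 then (k : ℝ) + 1 - ν / b
  else 0

section Knapsack

variable {ι : Type*} (s : Finset ι) (w β : ι → ℝ) {c t : ℝ}

theorem sum_mul_le_mul_add_sum_posPart (hc : 0 ≤ c) (hβ₀ : ∀ i ∈ s, 0 ≤ β i)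
    (hβ₁ : ∀ i ∈ s, β i ≤ 1) (ht : ∑ i ∈ s, β i ≤ t) :
    ∑ i ∈ s, w i * β i ≤ c * t + ∑ i ∈ s, (w i - c)⁺ := by
  have hpoint : ∀ i ∈ s, w i * β i ≤ c * β i + (w i - c)⁺ := fun i hi => by
    have h₁ : (w i - c) * β i ≤ (w i - c)⁺ * β i :=
      mul_le_mul_of_nonneg_right (le_posPart _) (hβ₀ i hi)
    have h₂ : (w i - c)⁺ * β i ≤ (w i - c)⁺ := mul_le_of_le_one_right (posPart_nonneg _) (hβ₁ i hi)
    linarith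
  calc ∑ i ∈ s, w i * β i ≤ ∑ i ∈ s, (c * β i + (w i - c)⁺) := sum_le_sum hpoint
    _ = c * ∑ i ∈ s, β i + ∑ i ∈ s, (w i - c)⁺ := by rw [sum_add_distrib, mul_sum]
    _ ≤ c * t + ∑ i ∈ s, (w i - c)⁺ := by gcongr

theorem sum_mul_eq_mul_add_sum_posPart (hβ : ∀ i ∈ s, (w i - c) * β i = (w i - c)⁺)
    (ht : ∑ i ∈ s, β i = t) :
    ∑ i ∈ s, w i * β i = c * t + ∑ i ∈ s, (w i - c)⁺ := by
  rw [← ht, mul_sum, ← sum_add_distrib]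
  refine sum_congr rfl fun i hi => ?_
  rw [← hβ i hi]
  ring

end Knapsack

theorem sum_range_two_mul_add_one (n : ℕ) : ∑ i ∈ range n, (2 * (i : ℝ) + 1) = n ^ 2 := by
  induction n with
  | zero => simp
  | succ n ih =>
    rw [sum_range_succ, ih]
    push_cast
    ring

theorem sum_range_posPart_two_mul_sub (m k : ℕ) :
    ∑ i ∈ range (m + 1 + k), (2 * ((i : ℝ) - m))⁺ = k * (k + 1) := by
  induction k with
  | zero =>
    rw [Nat.cast_zero, zero_mul]
    apply sum_eq_zero
    intro i hi
    have : (i : ℝ) ≤ m := by exact_mod_cast Nat.lt_succ_iff.mp (mem_range.mp hi)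
    exact posPart_of_nonpos (by linarith)
  | succ k ih =>
    rw [← add_assoc, sum_range_succ, ih, posPart_of_nonneg (by push_cast; linarith)]
    push_cast
    ring

theorem sum_range_ite_lt_ite_eq (m k : ℕ) (v : ℝ) :
    ∑ i ∈ range (m + 1 + k), (if i < m then (1 : ℝ) else if i = m then v else 0) = m + v := by
  induction k with
  | zero =>
    rw [add_zero, sum_range_succ, if_neg (lt_irrefl m), if_pos rfl,
      sum_congr rfl fun i hi => if_pos (mem_range.mp hi)]
    simp
  | succ k ih =>
    rw [← add_assoc, sum_range_succ, ih, if_neg (by omega), if_neg (by omega), add_zero]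

noncomputable def dmtWeight (Ms Mm i : ℕ) : ℝ := 2 * (i : ℝ) + 1 + Ms - Mm

theorem dmtObj_eq_sub (Ms Mm : ℕ) (α : Fin Mm → ℝ) :
    dmtObj Ms Mm α = Ms * Mm - ∑ i : Fin Mm, dmtWeight Ms Mm i * (1 - α i) := by
  have hsum : ∑ i : Fin Mm, dmtWeight Ms Mm i = Ms * Mm := by
    rw [Fin.sum_univ_eq_sum_range (fun i => dmtWeight Ms Mm i)]
    simp only [dmtWeight, add_sub_assoc]
    rw [sum_add_distrib, sum_range_two_mul_add_one, sum_const, card_range, nsmul_eq_mul]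
    ring
  rw [dmtObj, ← hsum, ← sum_sub_distrib]
  exact sum_congr rfl fun i _ => by rw [dmtWeight]; ring

theorem sum_posPart_dmtWeight_sub (Ms m k : ℕ) :
    ∑ i : Fin (m + 1 + k), (dmtWeight Ms (m + 1 + k) i - dmtWeight Ms (m + 1 + k) m)⁺
      = k * (k + 1) := by
  rw [Fin.sum_univ_eq_sum_range
    (fun i => (dmtWeight Ms (m + 1 + k) i - dmtWeight Ms (m + 1 + k) m)⁺),
    ← sum_range_posPart_two_mul_sub m k]
  exact sum_congr rfl fun i _ => by rw [dmtWeight, dmtWeight]; ring_nf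

theorem dmtObj_ge_of_dmtFeasible {Ms m k : ℕ} {ν b : ℝ} (hMs : m + 1 + k ≤ Ms)
    {α : Fin (m + 1 + k) → ℝ} (hα : dmtFeasible (m + 1 + k) ν b α) :
    Ms * (m + 1 + k : ℕ) - dmtWeight Ms (m + 1 + k) m * (ν / b) - k * (k + 1)
      ≤ dmtObj Ms (m + 1 + k) α := by
  obtain ⟨-, hα₀, hα₁, hsum⟩ := hα
  have hc : 0 ≤ dmtWeight Ms (m + 1 + k) m := by
    have : ((m + 1 + k : ℕ) : ℝ) ≤ Ms := by exact_mod_cast hMs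
    rw [dmtWeight]
    push_cast at this ⊢
    linarith
  have hbound := sum_mul_le_mul_add_sum_posPart univ
    (fun i : Fin (m + 1 + k) => dmtWeight Ms (m + 1 + k) i) (fun i => 1 - α i) hc
    (fun i _ => sub_nonneg.mpr (hα₁ i)) (fun i _ => sub_le_self _ (hα₀ i)) hsum
  rw [sum_posPart_dmtWeight_sub] at hbound
  rw [dmtObj_eq_sub]
  linarith

theorem dmtOptPoint_apply (m k : ℕ) (ν b : ℝ) (i : Fin (m + 1 + k)) :
    dmtOptPoint (m + 1 + k) k ν b i
      = if (i : ℕ) < m then 1 else if (i : ℕ) = m then k + 1 - ν / b else 0 := by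
  simp only [dmtOptPoint, show m + 1 + k - k - 1 = m by omega]

theorem sum_one_sub_dmtOptPoint (m k : ℕ) (ν b : ℝ) :
    ∑ i : Fin (m + 1 + k), (1 - dmtOptPoint (m + 1 + k) k ν b i) = ν / b := by
  simp only [sum_sub_distrib, sum_const, card_univ, Fintype.card_fin, dmtOptPoint_apply]
  rw [Fin.sum_univ_eq_sum_range (fun i => if i < m then (1 : ℝ) else if i = m then k + 1 - ν / b
    else 0), sum_range_ite_lt_ite_eq]
  ring

theorem dmtFeasible_dmtOptPoint {m k : ℕ} {ν b : ℝ} (hlow : (k : ℝ) ≤ ν / b)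
    (hhigh : ν / b ≤ k + 1) :
    dmtFeasible (m + 1 + k) ν b (dmtOptPoint (m + 1 + k) k ν b) := by
  refine ⟨fun i j hij => ?_, fun i => ?_, fun i => ?_, (sum_one_sub_dmtOptPoint m k ν b).le⟩
  · have hij' : (i : ℕ) ≤ j := hij
    simp only [dmtOptPoint_apply]
    split_ifs <;> first | linarith | omega
  all_goals rw [dmtOptPoint_apply]; split_ifs <;> linarith

theorem dmtObj_dmtOptPoint (Ms m k : ℕ) (ν b : ℝ) :
    dmtObj Ms (m + 1 + k) (dmtOptPoint (m + 1 + k) k ν b)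
      = Ms * (m + 1 + k : ℕ) - dmtWeight Ms (m + 1 + k) m * (ν / b) - k * (k + 1) := by
  have hslack : ∀ i ∈ (univ : Finset (Fin (m + 1 + k))),
      (dmtWeight Ms (m + 1 + k) i - dmtWeight Ms (m + 1 + k) m)
          * (1 - dmtOptPoint (m + 1 + k) k ν b i)
        = (dmtWeight Ms (m + 1 + k) i - dmtWeight Ms (m + 1 + k) m)⁺ := fun i _ => by
    have hdiff : dmtWeight Ms (m + 1 + k) i - dmtWeight Ms (m + 1 + k) m = 2 * ((i : ℝ) - m) := by
      rw [dmtWeight, dmtWeight]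
      ring
    rw [hdiff, dmtOptPoint_apply]
    split_ifs with hlt heq
    · have : (i : ℝ) < m := by exact_mod_cast hlt
      rw [posPart_of_nonpos (by linarith)]
      ring
    · simp [heq]
    · have : (m : ℝ) < i := by exact_mod_cast (by omega : m < (i : ℕ))
      rw [posPart_of_nonneg (by linarith)]
      ring
  rw [dmtObj_eq_sub,
    sum_mul_eq_mul_add_sum_posPart univ _ _ hslack (sum_one_sub_dmtOptPoint m k ν b),
    sum_posPart_dmtWeight_sub]
  ring

theorem dmt_linear_program_general (Ms Mm k : ℕ) (hMm : 1 ≤ Mm) (hMs : Mm ≤ Ms)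
    (hk : k ≤ Mm - 1) (ν b : ℝ)
    (hlow : (k : ℝ) ≤ ν / b) (hhigh : ν / b ≤ (k : ℝ) + 1) :
    IsLeast {y : ℝ | ∃ α : Fin Mm → ℝ, dmtFeasible Mm ν b α ∧ y = dmtObj Ms Mm α}
      (((Ms : ℝ) - k) * ((Mm : ℝ) - k) - ((Ms : ℝ) + Mm - 2 * k - 1) * (ν / b - k)) ∧
    dmtFeasible Mm ν b (dmtOptPoint Mm k ν b) ∧
    dmtObj Ms Mm (dmtOptPoint Mm k ν b) =
      ((Ms : ℝ) - k) * ((Mm : ℝ) - k) - ((Ms : ℝ) + Mm - 2 * k - 1) * (ν / b - k) := by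
  obtain ⟨m, rfl⟩ : ∃ m, Mm = m + 1 + k := ⟨Mm - 1 - k, by omega⟩
  have hvalue : ((Ms : ℝ) - k) * (((m + 1 + k : ℕ) : ℝ) - k)
        - ((Ms : ℝ) + (m + 1 + k : ℕ) - 2 * k - 1) * (ν / b - k)
      = Ms * (m + 1 + k : ℕ) - dmtWeight Ms (m + 1 + k) m * (ν / b) - k * (k + 1) := by
    rw [dmtWeight]
    push_cast
    ring
  have hfeas := dmtFeasible_dmtOptPoint (m := m) hlow hhigh
  rw [hvalue]
  refine ⟨⟨⟨_, hfeas, (dmtObj_dmtOptPoint Ms m k ν b).symm⟩, ?_⟩, hfeas,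
    dmtObj_dmtOptPoint Ms m k ν b⟩
  rintro _ ⟨α, hα, rfl⟩
  exact dmtObj_ge_of_dmtFeasible hMs hα

/-- Solution of the DMT linear program: the infimum equals `Φ_k − Υ_k(ν/b − k)`
    and is attained at the stated point. -/
theorem dmt_linear_program (Ms Mm k : ℕ) (hMm : 1 ≤ Mm) (hMs : Mm ≤ Ms)
    (hk : k ≤ Mm - 1) (ν b : ℝ) (hν : 0 ≤ ν) (hb : 0 < b)
    (hlow : (k : ℝ) ≤ ν / b) (hhigh : ν / b ≤ (k : ℝ) + 1) :
    IsLeast {y : ℝ | ∃ α : Fin Mm → ℝ, dmtFeasible Mm ν b α ∧ y = dmtObj Ms Mm α}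
      (((Ms : ℝ) - k) * ((Mm : ℝ) - k) - ((Ms : ℝ) + Mm - 2 * k - 1) * (ν / b - k)) ∧
    dmtFeasible Mm ν b (dmtOptPoint Mm k ν b) ∧
    dmtObj Ms Mm (dmtOptPoint Mm k ν b) =
      ((Ms : ℝ) - k) * ((Mm : ℝ) - k) - ((Ms : ℝ) + Mm - 2 * k - 1) * (ν / b - k) :=
  dmt_linear_program_general Ms Mm k hMm hMs hk ν b hlow hhigh
end

section
/- Let Φ_k = (M*−k)(M_*−k) and Υ_k = M*+M_*−2k−1 for integers M* ≥ M_* ≥ 1 and 0 ≤ k ≤ M_*−1, and let ν ≥ 0. For b in the interval [(Φ_{k+1}+ν)/(k+1), (Φ_k+ν)/k) (with the right endpoint +∞ when k = 0), the solution r* of the equation b·r = ν + Φ_k − Υ_k(r − k) is r* = (Φ_k + k·Υ_k + ν)/(Υ_k + b), and this r* satisfies k ≤ r* ≤ k+1. -/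
/-! The crossing equation is linear in `r`, with solution `r* = (Φ_k + kΥ_k + ν)/(Υ_k + b)`;
the denominator is positive because `Υ_k ≥ 1`. Clearing it, `k ≤ r*` becomes `k b ≤ Φ_k + ν`
and `r* ≤ k + 1` becomes `Φ_k − Υ_k + ν ≤ (k + 1) b`, i.e. the two ends of the range of `b`,
since `Φ_{k+1} = Φ_k − Υ_k`. -/

theorem sub_succ_mul_sub_succ {R : Type*} [CommRing R] (a c k : R) :
    (a - (k + 1)) * (c - (k + 1)) = (a - k) * (c - k) - (a + c - 2 * k - 1) := by
  ring

theorem mul_crossingPoint_eq {K : Type*} [Field K] {Φ Υ ν b k : K} (h : Υ + b ≠ 0) :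
    b * ((Φ + k * Υ + ν) / (Υ + b)) = ν + Φ - Υ * ((Φ + k * Υ + ν) / (Υ + b) - k) := by
  field_simp
  ring

section CrossingPoint

variable {K : Type*} [Field K] [LinearOrder K] [IsStrictOrderedRing K] {Φ Υ ν b k : K}

theorem le_crossingPoint_iff (h : 0 < Υ + b) :
    k ≤ (Φ + k * Υ + ν) / (Υ + b) ↔ k * b ≤ Φ + ν := by
  rw [le_div_iff₀ h]
  constructor <;> intro <;> linarith

theorem crossingPoint_le_iff (h : 0 < Υ + b) :
    (Φ + k * Υ + ν) / (Υ + b) ≤ k + 1 ↔ Φ - Υ + ν ≤ (k + 1) * b := by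
  rw [div_le_iff₀ h]
  constructor <;> intro <;> linarith

end CrossingPoint

/-- For `b ∈ [(Φ_{k+1}+ν)/(k+1), (Φ_k+ν)/k)` (right endpoint `+∞` when `k = 0`),
    the solution of `b·r = ν + Φ_k − Υ_k(r−k)` is
    `r* = (Φ_k + kΥ_k + ν)/(Υ_k + b)`, and `k ≤ r* ≤ k+1`. -/
theorem crossing_point_formula (Ms Mm k : ℕ) (hMm : 1 ≤ Mm) (hMs : Mm ≤ Ms)
    (hk : k ≤ Mm - 1) (ν b : ℝ) (hν : 0 ≤ ν) (hb : 0 < b)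
    (hblow : (((Ms : ℝ) - (k + 1)) * ((Mm : ℝ) - (k + 1)) + ν) / ((k : ℝ) + 1) ≤ b)
    (hbhigh : k = 0 ∨ b < (((Ms : ℝ) - k) * ((Mm : ℝ) - k) + ν) / (k : ℝ)) :
    let Φ : ℝ := ((Ms : ℝ) - k) * ((Mm : ℝ) - k)
    let Υ : ℝ := (Ms : ℝ) + Mm - 2 * k - 1
    let r : ℝ := (Φ + k * Υ + ν) / (Υ + b)
    b * r = ν + Φ - Υ * (r - k) ∧ (k : ℝ) ≤ r ∧ r ≤ (k : ℝ) + 1 := by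
  intro Φ Υ r
  have hkMm : (k : ℝ) + 1 ≤ Mm := by exact_mod_cast (by omega : k + 1 ≤ Mm)
  have hMmMs : (Mm : ℝ) ≤ Ms := by exact_mod_cast hMs
  have hden : 0 < Υ + b := by simp only [Υ]; linarith
  have hlow : Φ - Υ + ν ≤ (k + 1) * b := by
    rw [div_le_iff₀ (by positivity), sub_succ_mul_sub_succ] at hblow
    linarith
  have hhigh : k * b ≤ Φ + ν := by
    rcases hbhigh with rfl | hlt
    · have hΦ : 0 ≤ Φ := by simp only [Φ, Nat.cast_zero, sub_zero]; positivity
      simp only [Nat.cast_zero, zero_mul]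
      linarith
    · have hkpos : (0 : ℝ) < k := by
        rcases k.eq_zero_or_pos with rfl | h
        · simp only [Nat.cast_zero, div_zero] at hlt; linarith
        · exact_mod_cast h
      linarith [(lt_div_iff₀ hkpos).1 hlt]
  exact ⟨mul_crossingPoint_eq hden.ne', (le_crossingPoint_iff hden).2 hhigh,
    (crossingPoint_le_iff hden).2 hlow⟩
end

section
/- Let Φ_k = (M*−k)(M_*−k), Υ_k = M*+M_*−2k−1, and for b(k+1) > Φ_{k+1} define η_k = (b(k+1)−Φ_{k+1})/Υ_k and Γ_k = (1−η_k^{L−1})/(1−η_k) (for η_k ≠ 1). Then the quantity (Υ_k+b(1+k))(Υ_k+b(1+k)Γ_k) − b(k+1)Φ_kΓ_k is positive for all b ≥ Φ_{k+1}/(k+1) and all integers L ≥ 2, k ∈ {0,…,M_*−1}. -/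
/-!
Write `B = b(k+1)`. Since `Φ_k = Φ_{k+1} + Υ_k` and `η_k Υ_k = B - Φ_{k+1}`, the quantity equals
`Υ_k (Υ_k + B + B η_k Γ_k)`. Here `Υ_k ≥ 1` because `k < M_* ≤ M*`, the bound on `b` says `η_k ≥ 0`,
and `Γ_k = ∑_{i < L-1} η_k^i` (also when `η_k = 1`), so every factor is nonnegative and `Υ_k > 0`.
-/

open Finset

theorem ite_one_sub_pow_div_one_sub_eq_geom_sum {K : Type*} [DivisionRing K] [DecidableEq K]
    (x : K) (n : ℕ) :
    (if x = 1 then (n : K) else (1 - x ^ n) / (1 - x)) = ∑ i ∈ range n, x ^ i := by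
  split_ifs with hx
  · simp [hx]
  · rw [range_eq_Ico, geom_sum_Ico' hx (Nat.zero_le n), pow_zero]

section

variable {R : Type*} [CommRing R] {U B P e G : R}

theorem add_mul_add_mul_sub_eq (he : e * U = B - P) :
    (U + B) * (U + B * G) - B * (P + U) * G = U * (U + B + B * e * G) := by
  linear_combination (-(B * G)) * he

theorem add_mul_add_mul_sub_pos [LinearOrder R] [IsStrictOrderedRing R] (hU : 0 < U)
    (hB : 0 ≤ B) (he₀ : 0 ≤ e) (hG : 0 ≤ G) (he : e * U = B - P) :
    0 < (U + B) * (U + B * G) - B * (P + U) * G := by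
  rw [add_mul_add_mul_sub_eq he]
  have : 0 ≤ B * e * G := by positivity
  exact mul_pos hU (by linarith)

end

theorem bsld_denominator_pos_general (Ms Mm k : ℕ) (hMm : 1 ≤ Mm) (hMs : Mm ≤ Ms)
    (hk : k ≤ Mm - 1) (L : ℕ) (hL : 2 ≤ L) (b : ℝ)
    (hbound : ((Ms : ℝ) - (k + 1)) * ((Mm : ℝ) - (k + 1)) / ((k : ℝ) + 1) ≤ b) :
    let Φ : ℝ := ((Ms : ℝ) - k) * ((Mm : ℝ) - k)
    let Φ' : ℝ := ((Ms : ℝ) - (k + 1)) * ((Mm : ℝ) - (k + 1))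
    let Υ : ℝ := (Ms : ℝ) + Mm - 2 * k - 1
    let η : ℝ := (b * ((k : ℝ) + 1) - Φ') / Υ
    let Γ : ℝ := if η = 1 then (L : ℝ) - 1 else (1 - η ^ (L - 1)) / (1 - η)
    0 < (Υ + b * (1 + (k : ℝ))) * (Υ + b * (1 + (k : ℝ)) * Γ)
        - b * ((k : ℝ) + 1) * Φ * Γ := by
  intro Φ Φ' Υ η Γ
  have hkMm : (k : ℝ) + 1 ≤ Mm := by exact_mod_cast (by omega : k + 1 ≤ Mm)
  have hMmMs : (Mm : ℝ) ≤ Ms := by exact_mod_cast hMs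
  have hΥ : 0 < Υ := by simp only [Υ]; linarith
  have hΦ' : 0 ≤ Φ' := mul_nonneg (by linarith) (by linarith)
  have hB : Φ' ≤ b * ((k : ℝ) + 1) := (div_le_iff₀ (by positivity)).mp hbound
  have hη : 0 ≤ η := div_nonneg (by linarith) hΥ.le
  have hΓ : 0 ≤ Γ := by
    have hL1 : ((L - 1 : ℕ) : ℝ) = L - 1 := by push_cast [show 1 ≤ L by omega]; ring
    simp only [Γ, ← hL1, ite_one_sub_pow_div_one_sub_eq_geom_sum]
    exact sum_nonneg fun i _ => pow_nonneg hη i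
  have hΦ : Φ = Φ' + Υ := by simp only [Φ, Φ', Υ]; ring
  rw [hΦ, add_comm 1 (k : ℝ)]
  exact add_mul_add_mul_sub_pos hΥ (by linarith) hη hΓ (div_mul_cancel₀ _ hΥ.ne')

/-- Positivity of the BS-LD denominator: with `Φ_k = (M*−k)(M_*−k)`,
    `Υ_k = M*+M_*−2k−1`, `η_k = (b(k+1)−Φ_{k+1})/Υ_k` and
    `Γ_k = (1−η_k^{L−1})/(1−η_k)` (interpreted as `L−1` when `η_k = 1`), the
    quantity `(Υ_k+b(1+k))(Υ_k+b(1+k)Γ_k) − b(k+1)Φ_kΓ_k` is positive for all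
    `b ≥ Φ_{k+1}/(k+1)`, integers `L ≥ 2` and `k ∈ {0,…,M_*−1}`. -/
theorem bsld_denominator_pos (Ms Mm k : ℕ) (hMm : 1 ≤ Mm) (hMs : Mm ≤ Ms)
    (hk : k ≤ Mm - 1) (L : ℕ) (hL : 2 ≤ L) (b : ℝ) (hb : 0 < b)
    (hbound : ((Ms : ℝ) - (k + 1)) * ((Mm : ℝ) - (k + 1)) / ((k : ℝ) + 1) ≤ b) :
    let Φ : ℝ := ((Ms : ℝ) - k) * ((Mm : ℝ) - k)
    let Φ' : ℝ := ((Ms : ℝ) - (k + 1)) * ((Mm : ℝ) - (k + 1))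
    let Υ : ℝ := (Ms : ℝ) + Mm - 2 * k - 1
    let η : ℝ := (b * ((k : ℝ) + 1) - Φ') / Υ
    let Γ : ℝ := if η = 1 then (L : ℝ) - 1 else (1 - η ^ (L - 1)) / (1 - η)
    0 < (Υ + b * (1 + (k : ℝ))) * (Υ + b * (1 + (k : ℝ)) * Γ)
        - b * ((k : ℝ) + 1) * Φ * Γ :=
  bsld_denominator_pos_general Ms Mm k hMm hMs hk L hL b hbound
end
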